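/- arXiv:2305.05855 — 3 statements merged into one kernel-verified Lean document; each statement's English description precedes it below -/
import Mathlib

section
/- If u is analytic in the annulus r^{-1} ≤ |z| ≤ r for some r > 1, then the trapezoidal-rule error satisfies T_n(u) − I(u) = ∮_{|z|=r} u(z)/(z^n−1) dz/(iz) + ∮_{|z|=r^{-1}} u(z)/(z^{−n}−1) dz/(iz), and consequently |T_n(u) − I(u)| ≤ C r^{−n} for a constant C depending only on r and sup_{r^{-1}≤|z|≤r} |u(z)|. -/
open scoped Real
open Complex intervalIntegral

/-- The trapezoidal rule `T_n(u) = (2π/n) ∑_{k=1}^n u(e^{2πik/n})`. -/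
noncomputable def trap (n : ℕ) (u : ℂ → ℂ) : ℂ :=
  ((2 * π / n : ℝ) : ℂ) * ∑ k ∈ Finset.range n,
    u (Complex.exp (2 * π * Complex.I * ((k : ℂ) + 1) / n))

/-- `I(u) = ∫_0^{2π} u(e^{it}) dt = ∮_{|z|=1} u(z) dz/(iz)`. -/
noncomputable def circInt (u : ℂ → ℂ) : ℂ :=
  ∫ t in (0:ℝ)..(2 * π), u (Complex.exp (Complex.I * t))

/-- `∮_{|z|=ρ} f(z) dz/(iz)`, written via the parameterization `z = ρ e^{it}`. -/
noncomputable def circleIntDivIz (ρ : ℝ) (f : ℂ → ℂ) : ℂ :=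
  ∫ t in (0:ℝ)..(2 * π), f ((ρ : ℂ) * Complex.exp (Complex.I * t))

/-!
Partial fractions over the `n`-th roots of unity, `n / (z ^ n - 1) = ∑ₖ ωₖ / (z - ωₖ)`, and
Cauchy's formula on the annulus for each simple pole `ωₖ` show that the integrals of
`u z / (z ^ n - 1) dz/(iz)` over `|z| = r` and `|z| = r⁻¹` differ by exactly `T_n(u)`. On the
inner circle `1 / (z ^ (-n) - 1) = -1 - 1 / (z ^ n - 1)`, and the leftover `-∮ u dz/(iz)` over
`|z| = r⁻¹` is `-I(u)` by Cauchy's theorem. The bound follows from `|z ^ (±n) - 1| ≥ r ^ n - 1`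
on the two circles.
-/

open Finset Metric Set

lemma sum_pow_div_sub_pow_eq {n : ℕ} (hn : 0 < n) {ζ z : ℂ} (hζ : IsPrimitiveRoot ζ n)
    (hz : z ^ n ≠ 1) :
    ∑ k ∈ range n, ζ ^ (k + 1) / (z - ζ ^ (k + 1)) = n / (z ^ n - 1) := by
  have hprod : ∀ w : ℂ, w ^ n - 1 = ∏ k ∈ range n, (w - ζ ^ (k + 1)) := fun w => by
    simpa [Polynomial.eval_prod, pow_succ] using congrArg (Polynomial.eval w)
      (X_pow_sub_C_eq_prod hζ hn hζ.pow_eq_one)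
  have hne : ∀ k ∈ range n, z - ζ ^ (k + 1) ≠ 0 := fun k _ h => hz <| by
    rw [sub_eq_zero.1 h, ← pow_mul, mul_comm, pow_mul, hζ.pow_eq_one, one_pow]
  have hlogDeriv : ∑ k ∈ range n, (z - ζ ^ (k + 1))⁻¹ = n * z ^ (n - 1) / (z ^ n - 1) := by
    have h := logDeriv_prod (s := range n) (f := fun k w => w - ζ ^ (k + 1)) hne
      (fun _ _ => by fun_prop)
    simp_rw [← hprod] at h
    simpa [logDeriv_apply] using h.symm
  obtain ⟨m, rfl⟩ : ∃ m, n = m + 1 := ⟨n - 1, by omega⟩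
  calc ∑ k ∈ range (m + 1), ζ ^ (k + 1) / (z - ζ ^ (k + 1))
      = ∑ k ∈ range (m + 1), (z * (z - ζ ^ (k + 1))⁻¹ - 1) :=
        sum_congr rfl fun k hk => by field_simp [hne k hk]; ring
    _ = (m + 1 : ℕ) / (z ^ (m + 1) - 1) := by
        rw [sum_sub_distrib, ← mul_sum, hlogDeriv, sum_const, card_range, Nat.add_sub_cancel]
        field_simp
        push_cast
        ring

lemma pow_ne_one_of_norm_ne_one {𝕜 : Type*} [NormedDivisionRing 𝕜] {z : 𝕜} (hz : ‖z‖ ≠ 1)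
    {n : ℕ} (hn : n ≠ 0) : z ^ n ≠ 1 :=
  fun h => hz <| (pow_eq_one_iff_of_nonneg (norm_nonneg z) hn).1 <| by
    rw [← norm_pow, h, norm_one]

lemma sphere_subset_closedBall_diff_ball {c : ℂ} {a b ρ : ℝ} (ha : a ≤ ρ) (hb : ρ ≤ b) :
    sphere c ρ ⊆ closedBall c b \ ball c a := fun z hz =>
  ⟨mem_closedBall.2 ((mem_sphere.1 hz).trans_le hb), by simp [mem_sphere.1 hz, ha]⟩

lemma circleIntegral_eq_of_differentiableOn_annulus {E : Type*} [NormedAddCommGroup E]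
    [NormedSpace ℂ E] {c : ℂ} {a b : ℝ} (ha : 0 < a) (hab : a ≤ b) {f : ℂ → E}
    (hf : DifferentiableOn ℂ f (closedBall c b \ ball c a)) :
    (∮ z in C(c, b), f z) = ∮ z in C(c, a), f z :=
  circleIntegral_eq_of_differentiable_on_annulus_off_countable ha hab countable_empty
    hf.continuousOn fun _ hz => hf.differentiableAt <|
      (isOpen_ball.sdiff isClosed_closedBall).mem_nhds hz.1 |> Filter.mem_of_superset <|
        sdiff_subset_sdiff ball_subset_closedBall ball_subset_closedBall

lemma circleIntegral_sub_inv_of_notMem_closedBall {c w : ℂ} {R : ℝ} (hR : 0 ≤ R)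
    (hw : w ∉ closedBall c R) : (∮ z in C(c, R), (z - w)⁻¹) = 0 := by
  have hd : ∀ z ∈ closedBall c R, DifferentiableAt ℂ (fun z => (z - w)⁻¹) z := fun z hz =>
    (differentiableAt_id.sub_const w).inv (sub_ne_zero.2 (ne_of_mem_of_not_mem hz hw))
  exact circleIntegral_eq_zero_of_differentiable_on_off_countable hR countable_empty
    (fun z hz => (hd z hz).continuousAt.continuousWithinAt)
    fun z hz => hd z (ball_subset_closedBall hz.1)

lemma circleIntegral_div_sub_sub_circleIntegral_div_sub {c w : ℂ} {a b : ℝ} (ha : 0 < a)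
    (hw : w ∈ ball c b \ closedBall c a) {g : ℂ → ℂ}
    (hg : DifferentiableOn ℂ g (closedBall c b \ ball c a)) :
    (∮ z in C(c, b), g z / (z - w)) - (∮ z in C(c, a), g z / (z - w)) = 2 * π * I * g w := by
  have hwb : dist w c < b := hw.1
  have hwa : a < dist w c := not_le.1 hw.2
  have hA : closedBall c b \ ball c a ∈ nhds w :=
    Filter.mem_of_superset ((isOpen_ball.sdiff isClosed_closedBall).mem_nhds hw)
      (sdiff_subset_sdiff ball_subset_closedBall ball_subset_closedBall)
  have hslope := (Complex.differentiableOn_dslope hA).2 hg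
  have hsplit : ∀ ρ, a ≤ ρ → ρ ≤ b → w ∉ sphere c ρ → (∮ z in C(c, ρ), g z / (z - w)) =
      (∮ z in C(c, ρ), dslope g w z) + g w * ∮ z in C(c, ρ), (z - w)⁻¹ := by
    intro ρ haρ hρb hwρ
    have hρ : 0 ≤ ρ := ha.le.trans haρ
    have hne : ∀ z ∈ sphere c ρ, z - w ≠ 0 := fun z hz =>
      sub_ne_zero.2 (ne_of_mem_of_not_mem hz hwρ)
    have heq : EqOn (fun z => g z / (z - w)) (fun z => dslope g w z + g w * (z - w)⁻¹)
        (sphere c ρ) := fun z hz => by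
      dsimp only
      rw [dslope_of_ne _ (sub_ne_zero.1 (hne z hz)), slope_def_field]
      field_simp [hne z hz]
      ring
    rw [circleIntegral.integral_congr hρ heq,
      circleIntegral.integral_add (f := dslope g w) (g := fun z => g w * (z - w)⁻¹)
        ((hslope.mono (sphere_subset_closedBall_diff_ball haρ hρb)).continuousOn
          |>.circleIntegrable hρ)
        ((continuousOn_const.mul ((continuousOn_id.sub continuousOn_const).inv₀ hne))
          |>.circleIntegrable hρ),
      circleIntegral.integral_const_mul]
  rw [hsplit b (hwa.le.trans hwb.le) le_rfl fun h => hwb.ne (mem_sphere.1 h),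
    hsplit a le_rfl (hwa.le.trans hwb.le) fun h => hwa.ne' (mem_sphere.1 h),
    circleIntegral_eq_of_differentiableOn_annulus ha (hwa.le.trans hwb.le) hslope,
    circleIntegral.integral_sub_inv_of_mem_ball hw.1,
    circleIntegral_sub_inv_of_notMem_closedBall ha.le hw.2]
  ring

lemma circleIntegral_div_pow_sub_one_sub_eq_sum {n : ℕ} (hn : 0 < n) {ζ : ℂ}
    (hζ : IsPrimitiveRoot ζ n) {a b : ℝ} (ha : 0 < a) (ha1 : a < 1) (hb1 : 1 < b) {g : ℂ → ℂ}
    (hg : DifferentiableOn ℂ g (closedBall 0 b \ ball 0 a)) :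
    (∮ z in C(0, b), g z / (z ^ n - 1)) - (∮ z in C(0, a), g z / (z ^ n - 1)) =
      2 * π * I / n * ∑ k ∈ range n, ζ ^ (k + 1) * g (ζ ^ (k + 1)) := by
  have hroot : ∀ k : ℕ, ‖ζ ^ (k + 1)‖ = 1 := by simp [hζ.norm'_eq_one hn.ne']
  have hsplit : ∀ ρ, a ≤ ρ → ρ ≤ b → ρ ≠ 1 → (∮ z in C(0, ρ), g z / (z ^ n - 1)) =
      ∑ k ∈ range n, ζ ^ (k + 1) / n * ∮ z in C(0, ρ), g z / (z - ζ ^ (k + 1)) := by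
    intro ρ haρ hρb hρ1
    have hρ : 0 ≤ ρ := ha.le.trans haρ
    have hne : ∀ z ∈ sphere (0 : ℂ) ρ, ∀ k : ℕ, z - ζ ^ (k + 1) ≠ 0 := fun z hz k h => by
      rw [mem_sphere_zero_iff_norm, sub_eq_zero.1 h, hroot] at hz
      exact hρ1 hz.symm
    have heq : EqOn (fun z => g z / (z ^ n - 1))
        (fun z => ∑ k ∈ range n, ζ ^ (k + 1) / n * (g z / (z - ζ ^ (k + 1)))) (sphere 0 ρ) :=
      fun z hz => by
        have hzn : z ^ n ≠ 1 :=
          pow_ne_one_of_norm_ne_one (by rwa [mem_sphere_zero_iff_norm.1 hz]) hn.ne'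
        have hn' : (n : ℂ) ≠ 0 := Nat.cast_ne_zero.2 hn.ne'
        calc g z / (z ^ n - 1) = g z / n * (n / (z ^ n - 1)) := by
              rw [div_mul_div_comm, mul_comm (n : ℂ), mul_div_mul_right _ _ hn']
          _ = _ := by
              rw [← sum_pow_div_sub_pow_eq hn hζ hzn, mul_sum]
              exact sum_congr rfl fun k _ => by ring
    rw [circleIntegral.integral_congr hρ heq, circleIntegral.integral_fun_sum
      (f := fun k z => ζ ^ (k + 1) / n * (g z / (z - ζ ^ (k + 1)))) fun k _ =>
      ContinuousOn.circleIntegrable hρ <| continuousOn_const.mul <|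
        (hg.continuousOn.mono (sphere_subset_closedBall_diff_ball haρ hρb)).div
          (by fun_prop) fun z hz => hne z hz k]
    exact sum_congr rfl fun k _ => circleIntegral.integral_const_mul _ _ _ _
  rw [hsplit b (ha1.trans hb1).le le_rfl hb1.ne', hsplit a le_rfl (ha1.trans hb1).le ha1.ne,
    ← sum_sub_distrib, mul_sum]
  refine sum_congr rfl fun k _ => ?_
  rw [← mul_sub, circleIntegral_div_sub_sub_circleIntegral_div_sub ha
    (by simp [hroot, hb1, ha1]) hg]
  ring

lemma circleIntDivIz_eq_integral_circleMap (ρ : ℝ) (f : ℂ → ℂ) :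
    circleIntDivIz ρ f = ∫ t in (0 : ℝ)..2 * π, f (circleMap 0 ρ t) := by
  simp only [circleIntDivIz, circleMap_zero, mul_comm I]

lemma circleIntDivIz_eq_circleIntegral {ρ : ℝ} (hρ : ρ ≠ 0) (f : ℂ → ℂ) :
    circleIntDivIz ρ f = ∮ z in C(0, ρ), (I * z)⁻¹ * f z := by
  rw [circleIntDivIz_eq_integral_circleMap]
  refine integral_congr fun t _ => ?_
  have := circleMap_ne_center (c := 0) (θ := t) hρ
  simp only [deriv_circleMap, smul_eq_mul] at this ⊢
  field_simp

lemma norm_circleIntDivIz_le {ρ C : ℝ} {f : ℂ → ℂ} (hf : ∀ z ∈ sphere 0 |ρ|, ‖f z‖ ≤ C) :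
    ‖circleIntDivIz ρ f‖ ≤ 2 * π * C := by
  rw [circleIntDivIz_eq_integral_circleMap]
  calc _ ≤ C * |2 * π - 0| :=
        norm_integral_le_of_norm_le_const fun t _ => hf _ (circleMap_mem_sphere' 0 ρ t)
    _ = 2 * π * C := by rw [sub_zero, abs_of_pos Real.two_pi_pos, mul_comm]

lemma DifferentiableOn.inv_I_mul_mul {a b : ℝ} (ha : 0 < a) {f : ℂ → ℂ}
    (hf : DifferentiableOn ℂ f (closedBall 0 b \ ball 0 a)) :
    DifferentiableOn ℂ (fun z => (I * z)⁻¹ * f z) (closedBall 0 b \ ball 0 a) :=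
  ((differentiableOn_const I).mul differentiableOn_id |>.inv fun _ hz =>
    mul_ne_zero I_ne_zero fun h => hz.2 (h ▸ mem_ball_self ha)).mul hf

lemma circleIntDivIz_eq_of_differentiableOn_annulus {a b : ℝ} (ha : 0 < a) (hab : a ≤ b)
    {f : ℂ → ℂ} (hf : DifferentiableOn ℂ f (closedBall 0 b \ ball 0 a)) :
    circleIntDivIz b f = circleIntDivIz a f := by
  rw [circleIntDivIz_eq_circleIntegral (ha.trans_le hab).ne',
    circleIntDivIz_eq_circleIntegral ha.ne',
    circleIntegral_eq_of_differentiableOn_annulus ha hab (hf.inv_I_mul_mul ha)]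

lemma trap_eq_circleIntDivIz_sub {n : ℕ} (hn : 0 < n) {a b : ℝ} (ha : 0 < a) (ha1 : a < 1)
    (hb1 : 1 < b) {u : ℂ → ℂ} (hu : DifferentiableOn ℂ u (closedBall 0 b \ ball 0 a)) :
    trap n u = circleIntDivIz b (fun z => u z / (z ^ n - 1)) -
      circleIntDivIz a (fun z => u z / (z ^ n - 1)) := by
  set ζ : ℂ := Complex.exp (2 * π * I / n)
  have hnodes : ∀ k : ℕ, exp (2 * π * I * ((k : ℂ) + 1) / n) = ζ ^ (k + 1) := fun k => by
    rw [← Complex.exp_nat_mul]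
    push_cast
    ring_nf
  have hζ : IsPrimitiveRoot ζ n := isPrimitiveRoot_exp n hn.ne'
  have hn' : (n : ℂ) ≠ 0 := Nat.cast_ne_zero.2 hn.ne'
  rw [circleIntDivIz_eq_circleIntegral (ha.trans (ha1.trans hb1)).ne',
    circleIntDivIz_eq_circleIntegral ha.ne']
  simp_rw [← mul_div_assoc]
  rw [circleIntegral_div_pow_sub_one_sub_eq_sum hn hζ ha ha1 hb1
    (hu.inv_I_mul_mul ha), trap, mul_sum, mul_sum]
  refine sum_congr rfl fun k _ => ?_
  rw [hnodes]
  have : ζ ^ (k + 1) ≠ 0 := pow_ne_zero _ (Complex.exp_ne_zero _)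
  push_cast
  field_simp

lemma circleIntDivIz_div_zpow_neg_sub_one {ρ : ℝ} (hρ : 0 < ρ) (hρ1 : ρ ≠ 1) {n : ℕ}
    (hn : n ≠ 0) {u : ℂ → ℂ} (hu : ContinuousOn u (sphere 0 ρ)) :
    circleIntDivIz ρ (fun z => u z / (z ^ (-(n : ℤ)) - 1)) =
      -(circleIntDivIz ρ (fun z => u z / (z ^ n - 1)) + circleIntDivIz ρ u) := by
  have hz : ∀ z ∈ sphere (0 : ℂ) ρ, z ≠ 0 ∧ z ^ n - 1 ≠ 0 := fun z hz => by
    rw [mem_sphere_zero_iff_norm] at hz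
    exact ⟨norm_pos_iff.1 (hz ▸ hρ), sub_ne_zero.2 (pow_ne_one_of_norm_ne_one (hz ▸ hρ1) hn)⟩
  have heq : EqOn (fun z => (I * z)⁻¹ * (u z / (z ^ (-(n : ℤ)) - 1)))
      (fun z => -1 * ((I * z)⁻¹ * (u z / (z ^ n - 1)) + (I * z)⁻¹ * u z)) (sphere 0 ρ) :=
    fun z hz' => by
      obtain ⟨hz0, hzn⟩ := hz z hz'
      have hzn' : 1 - z ^ n ≠ 0 := fun h => hzn (by rw [← neg_sub, h, neg_zero])
      have := pow_ne_zero n hz0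
      simp only [zpow_neg, zpow_natCast]
      field_simp
      ring
  have hinv : ContinuousOn (fun z : ℂ => (I * z)⁻¹) (sphere 0 ρ) :=
    (continuousOn_const.mul continuousOn_id).inv₀ fun z hz' =>
      mul_ne_zero I_ne_zero (hz z hz').1
  rw [circleIntDivIz_eq_circleIntegral hρ.ne', circleIntDivIz_eq_circleIntegral hρ.ne',
    circleIntDivIz_eq_circleIntegral hρ.ne', circleIntegral.integral_congr hρ.le heq,
    circleIntegral.integral_const_mul,
    circleIntegral.integral_add (f := fun z => (I * z)⁻¹ * (u z / (z ^ n - 1)))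
      (g := fun z => (I * z)⁻¹ * u z)
      ((hinv.mul (hu.div (by fun_prop) fun z hz' => (hz z hz').2)).circleIntegrable hρ.le)
      ((hinv.mul hu).circleIntegrable hρ.le), neg_one_mul]

lemma trap_sub_circInt_eq {r : ℝ} (hr : 1 < r) {u : ℂ → ℂ}
    (hu : DifferentiableOn ℂ u (closedBall 0 r \ ball 0 r⁻¹)) {n : ℕ} (hn : 0 < n) :
    trap n u - circInt u = circleIntDivIz r (fun z => u z / (z ^ n - 1)) +
      circleIntDivIz r⁻¹ (fun z => u z / (z ^ (-(n : ℤ)) - 1)) := by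
  have hr0 : 0 < r⁻¹ := inv_pos.2 (zero_lt_one.trans hr)
  have hr1 : r⁻¹ < 1 := inv_lt_one_of_one_lt₀ hr
  have hcircInt : circInt u = circleIntDivIz r⁻¹ u := by
    rw [show circInt u = circleIntDivIz 1 u by simp [circInt, circleIntDivIz]]
    exact circleIntDivIz_eq_of_differentiableOn_annulus hr0 hr1.le
      (hu.mono (sdiff_subset_sdiff (closedBall_subset_closedBall hr.le) subset_rfl))
  rw [trap_eq_circleIntDivIz_sub hn hr0 hr1 hr hu, hcircInt,
    circleIntDivIz_div_zpow_neg_sub_one hr0 hr1.ne hn.ne'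
      (hu.continuousOn.mono (sphere_subset_closedBall_diff_ball le_rfl (hr1.trans hr).le))]
  ring

lemma norm_div_sub_one_le {r M : ℝ} (hr : 1 < r) {n : ℕ} (hn : 0 < n) {x w : ℂ}
    (hx : ‖x‖ ≤ M) (hw : r ^ n ≤ ‖w‖) : ‖x / (w - 1)‖ ≤ M / (1 - r⁻¹) * r⁻¹ ^ n := by
  have hM : 0 ≤ M := (norm_nonneg x).trans hx
  obtain ⟨m, rfl⟩ : ∃ m, n = m + 1 := ⟨n - 1, by omega⟩
  have hrm : 1 ≤ r ^ m := one_le_pow₀ hr.le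
  have hr0 : 0 < r := zero_lt_one.trans hr
  have hden : r ^ m * (r - 1) ≤ ‖w - 1‖ := by
    calc r ^ m * (r - 1) ≤ r ^ (m + 1) - 1 := by rw [pow_succ]; nlinarith
      _ ≤ ‖w‖ - ‖(1 : ℂ)‖ := by rw [norm_one]; linarith
      _ ≤ ‖w - 1‖ := norm_sub_norm_le w 1
  have hpos : 0 < r ^ m * (r - 1) := by have := pow_pos hr0 m; nlinarith
  calc ‖x / (w - 1)‖ = ‖x‖ / ‖w - 1‖ := norm_div x _
    _ ≤ M / (r ^ m * (r - 1)) := div_le_div₀ hM hx hpos hden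
    _ = M / (1 - r⁻¹) * r⁻¹ ^ (m + 1) := by
        have : r - 1 ≠ 0 := (sub_pos.2 hr).ne'
        rw [inv_pow, pow_succ]
        field_simp

lemma norm_trap_sub_circInt_le {r M : ℝ} (hr : 1 < r) {u : ℂ → ℂ}
    (hu : DifferentiableOn ℂ u (closedBall 0 r \ ball 0 r⁻¹))
    (hM : ∀ z ∈ closedBall 0 r \ ball 0 r⁻¹, ‖u z‖ ≤ M) {n : ℕ} (hn : 0 < n) :
    ‖trap n u - circInt u‖ ≤ 4 * π * (M / (1 - r⁻¹)) * r⁻¹ ^ n := by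
  have hr0 : 0 < r := zero_lt_one.trans hr
  have hr1 : r⁻¹ ≤ r := (inv_lt_one_of_one_lt₀ hr).le.trans hr.le
  set B := M / (1 - r⁻¹) * r⁻¹ ^ n
  have houter : ‖circleIntDivIz r (fun z => u z / (z ^ n - 1))‖ ≤ 2 * π * B :=
    norm_circleIntDivIz_le fun z hz => by
      rw [abs_of_pos hr0] at hz
      refine norm_div_sub_one_le hr hn (hM z (sphere_subset_closedBall_diff_ball hr1 le_rfl hz)) ?_
      rw [norm_pow, mem_sphere_zero_iff_norm.1 hz]
  have hinner : ‖circleIntDivIz r⁻¹ (fun z => u z / (z ^ (-(n : ℤ)) - 1))‖ ≤ 2 * π * B :=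
    norm_circleIntDivIz_le fun z hz => by
      rw [abs_of_pos (inv_pos.2 hr0)] at hz
      refine norm_div_sub_one_le hr hn (hM z (sphere_subset_closedBall_diff_ball le_rfl hr1 hz)) ?_
      rw [zpow_neg, zpow_natCast, norm_inv, norm_pow, mem_sphere_zero_iff_norm.1 hz, inv_pow,
        inv_inv]
  calc ‖trap n u - circInt u‖
      ≤ ‖circleIntDivIz r (fun z => u z / (z ^ n - 1))‖ +
        ‖circleIntDivIz r⁻¹ (fun z => u z / (z ^ (-(n : ℤ)) - 1))‖ := by
        rw [trap_sub_circInt_eq hr hu hn]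
        exact norm_add_le _ _
    _ ≤ 2 * π * B + 2 * π * B := add_le_add houter hinner
    _ = 4 * π * (M / (1 - r⁻¹)) * r⁻¹ ^ n := by ring

/-- the trapezoidal-rule error representation and the
exponential error bound `|T_n(u) − I(u)| ≤ C r^{−n}`. -/
theorem trapezoidal_error_representation_and_bound
    (r : ℝ) (hr : 1 < r) (u : ℂ → ℂ)
    (hu : AnalyticOnNhd ℂ u {z : ℂ | r⁻¹ ≤ ‖z‖ ∧ ‖z‖ ≤ r}) :
    (∀ n : ℕ, 1 ≤ n →
      trap n u - circInt u
        = circleIntDivIz r (fun z => u z / (z ^ n - 1))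
          + circleIntDivIz r⁻¹ (fun z => u z / (z ^ (-(n:ℤ)) - 1))) ∧
    (∃ C : ℝ, 0 ≤ C ∧ ∀ n : ℕ, 1 ≤ n →
      ‖trap n u - circInt u‖ ≤ C * (r⁻¹) ^ n) := by
  have hannulus : {z : ℂ | r⁻¹ ≤ ‖z‖ ∧ ‖z‖ ≤ r} = closedBall 0 r \ ball 0 r⁻¹ := by
    ext z
    simp [and_comm]
  rw [hannulus] at hu
  have hdiff := hu.differentiableOn
  obtain ⟨M, hM⟩ := ((isCompact_closedBall 0 r).diff isOpen_ball).exists_bound_of_continuousOn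
    hu.continuousOn
  have hM0 : 0 ≤ M := (norm_nonneg _).trans <| hM r <|
    sphere_subset_closedBall_diff_ball (inv_lt_one_of_one_lt₀ hr |>.trans hr).le le_rfl
      (by simp [abs_of_pos (zero_lt_one.trans hr)])
  refine ⟨fun n hn => trap_sub_circInt_eq hr hdiff hn, 4 * π * (M / (1 - r⁻¹)), ?_,
    fun n hn => norm_trap_sub_circInt_le hr hdiff hM hn⟩
  have : 0 ≤ 1 - r⁻¹ := sub_nonneg.2 (inv_le_one_of_one_le₀ hr.le)
  positivity
end

section
/- For odd p ≥ 3, the function w(t) = ((p−2)!!/(p−3)!!) ∫_0^t (t − τ)(sin τ)^{p−2} dτ satisfies w(t) = t − I_p(sin t), where I_p is the Taylor polynomial of arcsin truncated at degree p−2; moreover w: [0,2π] → [0,2π] is strictly increasing, w(0)=0, w(2π)=2π, and w(t) = O(t^p) as t → 0⁺ and w(t) = 2π + O((t−2π)^p) as t → 2π⁻. -/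
/-!
Write `c = (p-2)‼/(p-3)‼`. Differentiating under the integral gives `w' t = c ∫₀ᵗ sin^(p-2)`,
and iterating the reduction formula for `∫ sin ^ n` identifies this with
`1 - cos t · I_p'(sin t)`, the derivative of `t - I_p(sin t)`; both functions vanish at `0`,
so they agree. The integral of an odd power of `sin` is positive on `(0, π]` and vanishes at
`2π`, hence stays positive up to `2π`, so `w` is strictly increasing. Finally
`|t - τ|, |sin τ| ≤ |t|` gives `|w t| ≤ c |t|^p`, and `w t - 2π = w (t - 2π)` moves this
bound to `2π`.
-/

open scoped Real Nat
open Filter Topology Asymptotics intervalIntegral Real Finset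

lemma hasDerivAt_integral_sub_mul {f : ℝ → ℝ} (hf : Continuous f) (a t : ℝ) :
    HasDerivAt (fun u => ∫ τ in a..u, (u - τ) * f τ) (∫ τ in a..t, f τ) t := by
  have h_split : (fun u => ∫ τ in a..u, (u - τ) * f τ) =
      fun u => u * (∫ τ in a..u, f τ) - ∫ τ in a..u, τ * f τ := by
    funext u
    simp only [sub_mul]
    rw [integral_sub (f := fun τ => u * f τ) (g := fun τ => τ * f τ)
      ((hf.const_mul u).intervalIntegrable _ _) ((continuous_id.mul hf).intervalIntegrable _ _),
      integral_const_mul]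
  rw [h_split]
  refine (((hasDerivAt_id' t).mul (hf.integral_hasStrictDerivAt a t).hasDerivAt).sub
    ((continuous_id'.mul hf).integral_hasStrictDerivAt a t).hasDerivAt).congr_deriv ?_
  simp

-- At `j = 0` truncated subtraction gives `0‼ / 0‼ = 1`, the value of `(-1)‼ / 0‼`.
noncomputable def arcsinCoeff (j : ℕ) : ℝ := ((2 * j - 1)‼ : ℝ) / (2 * j)‼

noncomputable def arcsinPartialSum (m : ℕ) (x : ℝ) : ℝ :=
  ∑ j ∈ range m, arcsinCoeff j * x ^ (2 * j + 1) / (2 * j + 1)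

lemma arcsinCoeff_zero : arcsinCoeff 0 = 1 := by
  simp [arcsinCoeff]

@[simp]
lemma arcsinPartialSum_zero (m : ℕ) : arcsinPartialSum m 0 = 0 := by
  simp [arcsinPartialSum]

lemma arcsinCoeff_succ (m : ℕ) :
    arcsinCoeff (m + 1) = ((2 * m + 1)‼ : ℝ) / (2 * m)‼ / (2 * m + 2) := by
  rw [arcsinCoeff, show 2 * (m + 1) - 1 = 2 * m + 1 by omega, show 2 * (m + 1) = 2 * m + 2 by ring,
    Nat.doubleFactorial_add_two, div_div, mul_comm]
  push_cast
  ring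

lemma hasDerivAt_arcsinPartialSum (m : ℕ) (x : ℝ) :
    HasDerivAt (arcsinPartialSum m) (∑ j ∈ range m, arcsinCoeff j * x ^ (2 * j)) x := by
  refine HasDerivAt.fun_sum fun j _ =>
    (((hasDerivAt_pow (2 * j + 1) x).const_mul (arcsinCoeff j)).div_const _).congr_deriv ?_
  rw [Nat.add_sub_cancel]
  push_cast
  field_simp

theorem doubleFactorial_div_mul_integral_sin_pow_odd (m : ℕ) (t : ℝ) :
    ((2 * m + 1)‼ : ℝ) / (2 * m)‼ * ∫ x in 0..t, sin x ^ (2 * m + 1) =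
      1 - cos t * ∑ j ∈ range (m + 1), arcsinCoeff j * sin t ^ (2 * j) := by
  induction m with
  | zero => simp [arcsinCoeff_zero, integral_sin]
  | succ m ih =>
    rw [sum_range_succ, arcsinCoeff_succ, mul_add (cos t), ← sub_sub, ← ih,
      show 2 * (m + 1) = 2 * m + 2 by ring,
      show 2 * m + 2 + 1 = 2 * m + 1 + 2 by ring, integral_sin_pow,
      Nat.doubleFactorial_add_two, Nat.doubleFactorial_add_two]
    push_cast
    rw [sin_zero, zero_pow (Nat.succ_ne_zero _), zero_mul, zero_sub]
    field_simp
    ring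

lemma integral_sin_pow_odd_pos (m : ℕ) {t : ℝ} (ht₀ : 0 < t) (ht : t < 2 * π) :
    0 < ∫ x in 0..t, sin x ^ (2 * m + 1) := by
  have h_int (a b : ℝ) :
      IntervalIntegrable (fun x => sin x ^ (2 * m + 1)) MeasureTheory.volume a b :=
    (by fun_prop : Continuous fun x => sin x ^ (2 * m + 1)).intervalIntegrable a b
  rcases le_or_gt t π with htπ | htπ
  · exact intervalIntegral_pos_of_pos_on (h_int 0 t)
      (fun x hx => pow_pos (sin_pos_of_pos_of_lt_pi hx.1 (hx.2.trans_le htπ)) _) ht₀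
  have h_period : ∫ x in 0..2 * π, sin x ^ (2 * m + 1) = 0 := by
    have h := doubleFactorial_div_mul_integral_sin_pow_odd m (2 * π)
    rw [sum_range_succ'] at h
    simpa [arcsinCoeff_zero, Nat.doubleFactorial_pos, Nat.pos_iff_ne_zero.mp] using h
  have h_tail : 0 < ∫ x in t..2 * π, -sin x ^ (2 * m + 1) := by
    refine intervalIntegral_pos_of_pos_on (h_int t (2 * π)).neg (fun x hx => ?_) ht
    have hsin : sin x < 0 := by
      rw [← sin_sub_two_pi]
      exact sin_neg_of_neg_of_neg_pi_lt (by linarith [hx.2]) (by linarith [hx.1])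
    exact neg_pos.2 (Odd.pow_neg ⟨m, rfl⟩ hsin)
  rw [integral_neg] at h_tail
  linarith [integral_add_adjacent_intervals (h_int 0 t) (h_int t (2 * π))]

lemma abs_integral_sub_mul_sin_pow_le (n : ℕ) (t : ℝ) :
    |∫ τ in 0..t, (t - τ) * sin τ ^ n| ≤ |t| ^ (n + 2) := by
  have h : ∀ τ ∈ Set.uIoc 0 t, ‖(t - τ) * sin τ ^ n‖ ≤ |t| ^ (n + 1) := by
    intro τ hτ
    have hτ' := Set.uIoc_subset_uIcc hτ
    have h₁ : |t - τ| ≤ |t| := by simpa using Set.abs_sub_right_of_mem_uIcc hτ'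
    have h₂ : |sin τ| ≤ |t| :=
      abs_sin_le_abs.trans (by simpa using Set.abs_sub_left_of_mem_uIcc hτ')
    rw [norm_mul, norm_pow, norm_eq_abs, norm_eq_abs, pow_succ']
    gcongr
  simpa [pow_succ] using norm_integral_le_of_norm_le_const h

theorem doubleFactorial_div_mul_integral_sub_mul_sin_pow_odd (m : ℕ) (t : ℝ) :
    ((2 * m + 1)‼ : ℝ) / (2 * m)‼ * ∫ τ in 0..t, (t - τ) * sin τ ^ (2 * m + 1) =
      t - arcsinPartialSum (m + 1) (sin t) := by
  set S : ℝ → ℝ := fun s => 1 - cos s * ∑ j ∈ range (m + 1), arcsinCoeff j * sin s ^ (2 * j)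
  have hS : IntervalIntegrable S MeasureTheory.volume 0 t :=
    (by fun_prop : Continuous S).intervalIntegrable 0 t
  have hF : ∀ s, HasDerivAt
      (fun u => ((2 * m + 1)‼ : ℝ) / (2 * m)‼ * ∫ τ in 0..u, (u - τ) * sin τ ^ (2 * m + 1))
      (S s) s := fun s => by
    simp only [S, ← doubleFactorial_div_mul_integral_sin_pow_odd]
    exact (hasDerivAt_integral_sub_mul (by fun_prop) 0 s).const_mul _
  have hG : ∀ s, HasDerivAt (fun u => u - arcsinPartialSum (m + 1) (sin u)) (S s) s := fun s => by
    refine ((hasDerivAt_id' s).sub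
      ((hasDerivAt_arcsinPartialSum _ _).comp s (hasDerivAt_sin s))).congr_deriv ?_
    simp [S, mul_comm]
  have hF_ftc := integral_eq_sub_of_hasDerivAt (fun s _ => hF s) hS
  have hG_ftc := integral_eq_sub_of_hasDerivAt (fun s _ => hG s) hS
  simp only [integral_same, mul_zero, sub_zero, sin_zero, arcsinPartialSum_zero] at hF_ftc hG_ftc
  linarith

/-- properties of the corner-smoothing substitution
`w(t) = ((p−2)!!/(p−3)!!) ∫₀ᵗ (t−τ)(sin τ)^{p−2} dτ` for odd `p ≥ 3`:
it equals `t − I_p(sin t)` with `I_p` the truncated arcsin series, is strictly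
increasing on `[0,2π]` with `w(0)=0`, `w(2π)=2π`, and vanishes to order `p` at
both endpoints. -/
theorem corner_substitution_properties
    (p : ℕ) (hp : 3 ≤ p) (hodd : Odd p)
    (w : ℝ → ℝ)
    (hw : ∀ t : ℝ, w t = ((Nat.doubleFactorial (p - 2) : ℝ) /
        (Nat.doubleFactorial (p - 3) : ℝ)) *
      ∫ τ in (0:ℝ)..t, (t - τ) * Real.sin τ ^ (p - 2)) :
    (∀ t : ℝ, w t = t - ∑ j ∈ Finset.range ((p - 1) / 2),
        ((Nat.doubleFactorial (2 * j - 1) : ℝ) / (Nat.doubleFactorial (2 * j) : ℝ))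
          * Real.sin t ^ (2 * j + 1) / (2 * j + 1)) ∧
    StrictMonoOn w (Set.Icc 0 (2 * π)) ∧
    w 0 = 0 ∧ w (2 * π) = 2 * π ∧
    w =O[𝓝[>] 0] (fun t : ℝ => t ^ p) ∧
    (fun t : ℝ => w t - 2 * π) =O[𝓝[<] (2 * π)] (fun t : ℝ => (t - 2 * π) ^ p) := by
  obtain ⟨m, rfl⟩ : ∃ m, p = 2 * m + 3 := by
    obtain ⟨k, rfl⟩ := hodd
    exact ⟨k - 1, by omega⟩
  simp only [show 2 * m + 3 - 2 = 2 * m + 1 by omega, show 2 * m + 3 - 3 = 2 * m by omega] at hw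
  set c : ℝ := ((2 * m + 1)‼ : ℝ) / (2 * m)‼
  have hw_eq (t : ℝ) : w t = t - arcsinPartialSum (m + 1) (sin t) :=
    (hw t).trans (doubleFactorial_div_mul_integral_sub_mul_sin_pow_odd m t)
  have hw_bound (t : ℝ) : ‖w t‖ ≤ c * ‖t ^ (2 * m + 3)‖ := by
    rw [hw, norm_mul, norm_of_nonneg (by positivity), norm_pow]
    exact mul_le_mul_of_nonneg_left (abs_integral_sub_mul_sin_pow_le _ t) (by positivity)
  have hw_deriv (t : ℝ) : HasDerivAt w (c * ∫ τ in 0..t, sin τ ^ (2 * m + 1)) t := by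
    rw [funext hw]
    exact (hasDerivAt_integral_sub_mul (by fun_prop) 0 t).const_mul c
  refine ⟨?_, ?_, by simp [hw], by simp [hw_eq], .of_bound c (.of_forall hw_bound), ?_⟩
  · rw [show (2 * m + 3 - 1) / 2 = m + 1 by omega]
    exact hw_eq
  · refine strictMonoOn_of_hasDerivWithinAt_pos (convex_Icc _ _)
      (fun t _ => (hw_deriv t).continuousAt.continuousWithinAt)
      (fun t _ => (hw_deriv t).hasDerivWithinAt) fun t ht => ?_
    rw [interior_Icc] at ht
    exact mul_pos (by positivity) (integral_sin_pow_odd_pos m ht.1 ht.2)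
  · refine .of_bound c (.of_forall fun t => ?_)
    have h_shift : w t - 2 * π = w (t - 2 * π) := by
      rw [hw_eq, hw_eq, sin_sub_two_pi]
      ring
    rw [h_shift]
    exact hw_bound _
end

section
/- Let g: ℂ → ℂ be 2π-periodic, analytic and injective on the strip {t : |Im t| < log r}, mapping [0,2π) onto a simple closed curve Γ. If x ∈ g({|Im t| < log r}) then the equation x = g(t_0) has exactly one solution t_0 in the strip modulo 2π, and for this t_0 the complexified squared distance (x_1 − g_1(t))² + (x_2 − g_2(t))² (with x = x_1 + i x_2, g = g_1 + i g_2 real-analytic on ℝ) vanishes at t = t_0; moreover the ratio |x − g(t)|² / (4 sin((t − t_0)/2) sin((t − \overline{t_0})/2)) extends to a nonvanishing analytic function of t in a neighborhood of ℝ when t_0 is a simple zero. -/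
open scoped Real
open Complex

open Topology Function ComplexConjugate

/-! On the real axis, `|x - g t|² = (x - g t) * (conj x - ḡ t)` with `ḡ = conj ∘ g ∘ conj` the
Schwarz reflection of `g`, again analytic and `2π`-periodic on the conjugation-invariant strip.
By periodicity and injectivity modulo `2π`, `x - g` vanishes in the strip exactly on
`t₀ + 2πℤ`, simply because `g' t₀ ≠ 0`; these are also exactly the zeros of
`2 sin ((t - t₀) / 2)`, all simple, so the quotient of the two is analytic and zero-free. The same
holds for `conj x - ḡ` and `2 sin ((t - conj t₀) / 2)`, and the product of the two quotients is
the required function. -/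

section SimpleZeros

variable {𝕜 : Type*} [NontriviallyNormedField 𝕜]

theorem AnalyticAt.dslope {f : 𝕜 → 𝕜} {a : 𝕜} (hf : AnalyticAt 𝕜 f a) :
    AnalyticAt 𝕜 (dslope f a) a :=
  let ⟨_, hp⟩ := hf
  ⟨_, hp.has_fpower_series_dslope_fslope⟩

theorem dslope_div_dslope_of_ne {φ ψ : 𝕜 → 𝕜} {a t : 𝕜} (hφ : φ a = 0) (hψ : ψ a = 0)
    (ht : t ≠ a) : dslope φ a t / dslope ψ a t = φ t / ψ t := by
  rw [dslope_of_ne _ ht, dslope_of_ne _ ht, slope_def_field, slope_def_field, hφ, hψ, sub_zero,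
    sub_zero, div_div_div_cancel_right₀ (sub_ne_zero.2 ht)]

open Classical in
noncomputable def simpleZerosQuotient (φ ψ : 𝕜 → 𝕜) (t : 𝕜) : 𝕜 :=
  if ψ t = 0 then deriv φ t / deriv ψ t else φ t / ψ t

theorem simpleZerosQuotient_eventuallyEq_dslope_div {φ ψ : 𝕜 → 𝕜} {a : 𝕜}
    (hφa : φ a = 0) (hψa : ψ a = 0) (hψ : DifferentiableAt 𝕜 ψ a) (hψ' : deriv ψ a ≠ 0) :
    simpleZerosQuotient φ ψ =ᶠ[𝓝 a] fun t => dslope φ a t / dslope ψ a t := by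
  filter_upwards [eventually_nhdsWithin_iff.1 (hψ.hasDerivAt.eventually_ne (c := 0) hψ')]
    with t ht
  rcases eq_or_ne t a with rfl | hta
  · simp [simpleZerosQuotient, hψa, dslope_same]
  · simp [simpleZerosQuotient, ht hta, dslope_div_dslope_of_ne hφa hψa hta]

theorem AnalyticOnNhd.exists_eq_mul_of_simple_zeros {T : Set 𝕜} {φ ψ : 𝕜 → 𝕜}
    (hφ : AnalyticOnNhd 𝕜 φ T) (hψ : AnalyticOnNhd 𝕜 ψ T)
    (hzero : ∀ t ∈ T, φ t = 0 ↔ ψ t = 0)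
    (hsimple : ∀ t ∈ T, ψ t = 0 → deriv φ t ≠ 0 ∧ deriv ψ t ≠ 0) :
    ∃ h : 𝕜 → 𝕜, AnalyticOnNhd 𝕜 h T ∧ (∀ t ∈ T, h t ≠ 0) ∧ ∀ t ∈ T, φ t = h t * ψ t := by
  refine ⟨simpleZerosQuotient φ ψ, fun a ha => ?_, fun a ha => ?_, fun a ha => ?_⟩ <;>
    by_cases hψa : ψ a = 0
  · have hφa := (hzero a ha).2 hψa
    obtain ⟨hφ', hψ'⟩ := hsimple a ha hψa
    refine AnalyticAt.congr ?_ (simpleZerosQuotient_eventuallyEq_dslope_div hφa hψa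
      (hψ a ha).differentiableAt hψ').symm
    exact (hφ a ha).dslope.div (hψ a ha).dslope (by rwa [dslope_same])
  · refine ((hφ a ha).div (hψ a ha) hψa).congr ?_
    filter_upwards [(hψ a ha).continuousAt.eventually_ne hψa] with t ht
    simp [simpleZerosQuotient, ht]
  · obtain ⟨hφ', hψ'⟩ := hsimple a ha hψa
    simpa [simpleZerosQuotient, hψa] using ⟨hφ', hψ'⟩
  · simpa [simpleZerosQuotient, hψa] using mt (hzero a ha).1 hψa
  · simp [hψa, (hzero a ha).2 hψa]
  · simp [simpleZerosQuotient, hψa]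

end SimpleZeros

theorem Function.Periodic.deriv {𝕜 F : Type*} [NontriviallyNormedField 𝕜] [NormedAddCommGroup F]
    [NormedSpace 𝕜 F] {f : 𝕜 → F} {c : 𝕜} (hf : Periodic f c) : Periodic (deriv f) c := fun t => by
  rw [← deriv_comp_add_const, funext hf]

theorem Function.Periodic.conj_comp_conj {f : ℂ → ℂ} {c : ℂ} (hf : Periodic f c)
    (hc : conj c = c) : Periodic (conj ∘ f ∘ conj) c := fun t => by
  simp [hc, hf (conj t)]

namespace Complex

theorem sin_half_sub_eq_zero_iff {c t : ℂ} :
    sin ((t - c) / 2) = 0 ↔ ∃ k : ℤ, t = c + 2 * π * k := by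
  rw [sin_eq_zero_iff]
  exact exists_congr fun k => ⟨fun hk => by linear_combination 2 * hk,
    fun hk => by linear_combination hk / 2⟩

theorem hasDerivAt_two_mul_sin_half_sub (c t : ℂ) :
    HasDerivAt (fun s => 2 * sin ((s - c) / 2)) (cos ((t - c) / 2)) t :=
  ((((hasDerivAt_id' t).sub_const c).div_const 2).csin.const_mul 2).congr_deriv (by ring)

theorem cos_ne_zero_of_sin_eq_zero {z : ℂ} (hz : sin z = 0) : cos z ≠ 0 := by
  rcases sin_eq_zero_iff_cos_eq.1 hz with h | h <;> simp [h]

theorem sq_sub_re_add_sq_sub_im (z w : ℂ) :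
    ((z.re : ℂ) - w.re) ^ 2 + ((z.im : ℂ) - w.im) ^ 2 = (z - w) * (conj z - conj w) := by
  rw [← map_sub, mul_conj, normSq_apply, sub_re, sub_im]
  push_cast
  ring

end Complex

theorem AnalyticOnNhd.conj_comp_conj {S : Set ℂ} {g : ℂ → ℂ} (hS : IsOpen S)
    (hconj : ∀ t ∈ S, conj t ∈ S) (hg : AnalyticOnNhd ℂ g S) :
    AnalyticOnNhd ℂ (conj ∘ g ∘ conj) S :=
  DifferentiableOn.analyticOnNhd (fun t ht => (differentiableAt_conj_conj_iff.2
    (hg _ (hconj t ht)).differentiableAt).differentiableWithinAt) hS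

theorem AnalyticOnNhd.exists_sub_eq_mul_sin_half_sub {T : Set ℂ} {g : ℂ → ℂ}
    (hg : AnalyticOnNhd ℂ g T) (hper : Periodic g (2 * π)) {t₀ : ℂ}
    (hpre : ∀ t ∈ T, g t = g t₀ → ∃ m : ℤ, t = t₀ + 2 * π * m) (hd : deriv g t₀ ≠ 0) :
    ∃ h : ℂ → ℂ, AnalyticOnNhd ℂ h T ∧ (∀ t ∈ T, h t ≠ 0) ∧
      ∀ t ∈ T, g t₀ - g t = h t * (2 * sin ((t - t₀) / 2)) := by
  have hψ (t : ℂ) := hasDerivAt_two_mul_sin_half_sub t₀ t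
  have hperiod {t : ℂ} (k : ℤ) (hk : t = t₀ + 2 * π * k) : ∀ f : ℂ → ℂ,
      Periodic f (2 * π) → f t = f t₀ := fun f hf => by
    rw [hk, mul_comm]; exact hf.int_mul k t₀
  refine AnalyticOnNhd.exists_eq_mul_of_simple_zeros (φ := fun t => g t₀ - g t)
    (analyticOnNhd_const.sub hg)
    (fun t _ => Differentiable.analyticAt (fun s => (hψ s).differentiableAt) t)
    (fun t ht => ?_) (fun t ht hψt => ?_)
  · rw [sub_eq_zero, eq_comm, mul_eq_zero, or_iff_right two_ne_zero, sin_half_sub_eq_zero_iff]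
    exact ⟨hpre t ht, fun ⟨k, hk⟩ => hperiod k hk g hper⟩
  · obtain ⟨k, hk⟩ := sin_half_sub_eq_zero_iff.1 ((mul_eq_zero.1 hψt).resolve_left two_ne_zero)
    rw [deriv_const_sub, (hψ t).deriv, hperiod k hk _ hper.deriv]
    exact ⟨neg_ne_zero.2 hd, cos_ne_zero_of_sin_eq_zero (sin_half_sub_eq_zero_iff.2 ⟨k, hk⟩)⟩

theorem preimage_and_singularity_swap_general
    (r : ℝ) (hr : 1 < r) (S : Set ℂ)
    (hS : S = {t : ℂ | |t.im| < Real.log r})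
    (g g₁ g₂ : ℂ → ℂ)
    (hper : ∀ t : ℂ, g (t + 2 * π) = g t)
    (hg : AnalyticOnNhd ℂ g S)
    (hre : ∀ t : ℝ, g₁ t = ((g t).re : ℂ)) (him : ∀ t : ℝ, g₂ t = ((g t).im : ℂ))
    (hsplit : ∀ t ∈ S, g t = g₁ t + Complex.I * g₂ t)
    (hinj : ∀ s ∈ S, ∀ t ∈ S, g s = g t → ∃ m : ℤ, s = t + 2 * π * m)
    (x t₀ : ℂ) (ht₀ : t₀ ∈ S) (hx : g t₀ = x) :
    (∀ t₁ ∈ S, g t₁ = x → ∃ m : ℤ, t₁ = t₀ + 2 * π * m) ∧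
    ((x.re : ℂ) - g₁ t₀) ^ 2 + ((x.im : ℂ) - g₂ t₀) ^ 2 = 0 ∧
    (deriv g t₀ ≠ 0 →
      ∃ (h : ℂ → ℂ) (ε : ℝ), 0 < ε ∧
        AnalyticOnNhd ℂ h {t : ℂ | |t.im| < ε} ∧
        (∀ t : ℂ, |t.im| < ε → h t ≠ 0) ∧
        ∀ t : ℝ,
          ((x.re : ℂ) - g₁ t) ^ 2 + ((x.im : ℂ) - g₂ t) ^ 2
            = h t * (4 * Complex.sin (((t : ℂ) - t₀) / 2)
                * Complex.sin (((t : ℂ) - (starRingEnd ℂ) t₀) / 2))) := by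
  subst hx
  have hSopen : IsOpen S := hS ▸ isOpen_lt continuous_im.abs continuous_const
  have hconjS : ∀ t ∈ S, conj t ∈ S := by simp [hS]
  have hpre : ∀ t ∈ S, g t = g t₀ → ∃ m : ℤ, t = t₀ + 2 * π * m := fun t ht => hinj t ht t₀ ht₀
  refine ⟨hpre, ?_, fun hd => ?_⟩
  · -- `a ^ 2 + b ^ 2 = (a - I * b) * (a + I * b)`, and here `a + I * b = 0`
    linear_combination (((g t₀).re : ℂ) - g₁ t₀ - I * ((g t₀).im - g₂ t₀)) *
      (hsplit t₀ ht₀ - (re_add_im (g t₀)).symm) + ((g t₀).im - g₂ t₀) ^ 2 * I_sq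
  have hpre' : ∀ t ∈ S, (conj ∘ g ∘ conj) t = (conj ∘ g ∘ conj) (conj t₀) →
      ∃ m : ℤ, t = conj t₀ + 2 * π * m := fun t ht hgt => by
    obtain ⟨m, hm⟩ := hpre _ (hconjS t ht) (by simpa using (starRingEnd ℂ).injective hgt)
    exact ⟨m, by simpa [map_ofNat] using congrArg conj hm⟩
  obtain ⟨h₁, h₁_an, h₁_ne, h₁_eq⟩ := hg.exists_sub_eq_mul_sin_half_sub hper hpre hd
  obtain ⟨h₂, h₂_an, h₂_ne, h₂_eq⟩ :=
    (hg.conj_comp_conj hSopen hconjS).exists_sub_eq_mul_sin_half_sub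
      (Periodic.conj_comp_conj hper (by simp [map_ofNat])) hpre' (by simpa using hd)
  refine ⟨h₁ * h₂, Real.log r, Real.log_pos hr, hS ▸ h₁_an.mul h₂_an,
    fun t ht => mul_ne_zero (h₁_ne t (hS ▸ ht)) (h₂_ne t (hS ▸ ht)), fun t => ?_⟩
  have htS : (t : ℂ) ∈ S := by simpa [hS] using Real.log_pos hr
  have h₂_eq_t := h₂_eq t htS
  simp only [comp_apply, conj_ofReal, conj_conj] at h₂_eq_t
  rw [hre, him, sq_sub_re_add_sq_sub_im, h₁_eq t htS, h₂_eq_t, Pi.mul_apply]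
  ring

/-- let `g` be `2π`-periodic, analytic and injective modulo
periods on the strip `|Im t| < log r`, with real-analytic components
`g₁, g₂` (analytic continuations of `Re g`, `Im g` from ℝ). If `x = g(t₀)` for
`t₀` in the strip, then `t₀` is the unique preimage modulo `2π`, the
complexified squared distance vanishes at `t₀`, and when `t₀` is a simple zero
(`g'(t₀) ≠ 0`) the ratio
`|x−g(t)|² / (4 sin((t−t₀)/2) sin((t−conj t₀)/2))` extends to a nonvanishing
analytic function in a neighborhood of ℝ. -/
theorem preimage_and_singularity_swap
    (r : ℝ) (hr : 1 < r) (S : Set ℂ)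
    (hS : S = {t : ℂ | |t.im| < Real.log r})
    (g g₁ g₂ : ℂ → ℂ)
    (hper : ∀ t : ℂ, g (t + 2 * π) = g t)
    (hg : AnalyticOnNhd ℂ g S)
    (hg₁ : AnalyticOnNhd ℂ g₁ S) (hg₂ : AnalyticOnNhd ℂ g₂ S)
    (hre : ∀ t : ℝ, g₁ t = ((g t).re : ℂ)) (him : ∀ t : ℝ, g₂ t = ((g t).im : ℂ))
    (hsplit : ∀ t ∈ S, g t = g₁ t + Complex.I * g₂ t)
    (hinj : ∀ s ∈ S, ∀ t ∈ S, g s = g t → ∃ m : ℤ, s = t + 2 * π * m)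
    (x t₀ : ℂ) (ht₀ : t₀ ∈ S) (hx : g t₀ = x) :
    (∀ t₁ ∈ S, g t₁ = x → ∃ m : ℤ, t₁ = t₀ + 2 * π * m) ∧
    ((x.re : ℂ) - g₁ t₀) ^ 2 + ((x.im : ℂ) - g₂ t₀) ^ 2 = 0 ∧
    (deriv g t₀ ≠ 0 →
      ∃ (h : ℂ → ℂ) (ε : ℝ), 0 < ε ∧
        AnalyticOnNhd ℂ h {t : ℂ | |t.im| < ε} ∧
        (∀ t : ℂ, |t.im| < ε → h t ≠ 0) ∧
        ∀ t : ℝ,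
          ((x.re : ℂ) - g₁ t) ^ 2 + ((x.im : ℂ) - g₂ t) ^ 2
            = h t * (4 * Complex.sin (((t : ℂ) - t₀) / 2)
                * Complex.sin (((t : ℂ) - (starRingEnd ℂ) t₀) / 2))) :=
  preimage_and_singularity_swap_general r hr S hS g g₁ g₂ hper hg hre him hsplit hinj x t₀ ht₀ hx
end
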